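/- arXiv:2507.13510 — 6 statements merged into one kernel-verified Lean document; each statement's English description precedes it below -/
import Mathlib

section
/- Let V be a 2-dimensional vector space over a field k. The trilinear forms g(a₁,a₂,a₃) = tr(a₁a₂a₃) − tr(a₃a₂a₁) and h(a₁,a₂,a₃) = tr(a₁)tr(a₂)tr(a₃) − tr(a₁a₂a₃) on L(V), viewed as linear forms on L(V)^{⊗3} ≅ L(V^{⊗3}), satisfy h = g ∘ L_{t_{(321)}}, where L_{t_{(321)}} is left-multiplication by the endomorphism t_{(321)} of V^{⊗3} induced by the cyclic permutation (321). -/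
/-!
Under the trace pairing, a linear form on `End (V ⊗ V ⊗ V)` is `x ↦ tr (s * x)` for a unique `s`,
and `tr (t_σ * (a₁ ⊗ a₂ ⊗ a₃))` is the product over the cycles of `σ` of the traces of the
corresponding products of the `aᵢ`. Hence `g` is paired with `t² - t` and `h` with `1 - t²`, where
`t = t_{(321)}`, and `h = g ∘ L_t` becomes the operator identity `(t² - t) t = 1 - t²`, i.e. `t³ = 1`.
-/

open TensorProduct

section Ext

variable {R M N P Q X : Type*} [CommRing R] [AddCommGroup M] [Module R M] [AddCommGroup N]
  [Module R N] [AddCommGroup P] [Module R P] [AddCommGroup Q] [Module R Q] [AddCommGroup X]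
  [Module R X] [Module.Free R M] [Module.Finite R M] [Module.Free R N] [Module.Finite R N]

theorem TensorProduct.ext_on_map {φ ψ : (M ⊗[R] N →ₗ[R] P ⊗[R] Q) →ₗ[R] X}
    (H : ∀ f g, φ (map f g) = ψ (map f g)) : φ = ψ :=
  (LinearMap.cancel_right (homTensorHomEquiv R M N P Q).surjective).1 <|
    TensorProduct.ext' fun f g => by simpa using H f g

theorem TensorProduct.ext_on_map_threefold' {M' N' : Type*} [AddCommGroup M'] [Module R M']
    [AddCommGroup N'] [Module R N'] [Module.Free R P] [Module.Finite R P]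
    {φ ψ : (M ⊗[R] (N ⊗[R] P) →ₗ[R] M' ⊗[R] (N' ⊗[R] Q)) →ₗ[R] X}
    (H : ∀ f₁ f₂ f₃, φ (map f₁ (map f₂ f₃)) = ψ (map f₁ (map f₂ f₃))) : φ = ψ :=
  ext_on_map fun f₁ _ => LinearMap.congr_fun
    (ext_on_map (φ := φ ∘ₗ mapBilinear (.id R) M _ M' _ f₁)
      (ψ := ψ ∘ₗ mapBilinear (.id R) M _ M' _ f₁) fun f₂ f₃ => H f₁ f₂ f₃) _

end Ext

theorem LinearMap.trace_tensorProduct_threefold_eq_sum {R M N P ι κ μ : Type*} [CommRing R]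
    [AddCommGroup M] [Module R M] [AddCommGroup N] [Module R N] [AddCommGroup P] [Module R P]
    [Fintype ι] [DecidableEq ι] [Fintype κ] [DecidableEq κ] [Fintype μ] [DecidableEq μ]
    (b₁ : Module.Basis ι R M) (b₂ : Module.Basis κ R N) (b₃ : Module.Basis μ R P)
    (F : Module.End R (M ⊗[R] (N ⊗[R] P))) :
    LinearMap.trace R _ F = ∑ p, ∑ q, ∑ r,
      (b₁.tensorProduct (b₂.tensorProduct b₃)).repr (F (b₁ p ⊗ₜ (b₂ q ⊗ₜ b₃ r))) (p, (q, r)) := by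
  rw [LinearMap.trace_eq_matrix_trace R (b₁.tensorProduct (b₂.tensorProduct b₃)), Matrix.trace,
    Fintype.sum_prod_type, Finset.sum_congr rfl fun p _ => Fintype.sum_prod_type _]
  simp [LinearMap.toMatrix_apply]

section CyclicPermutation

variable {R V : Type*} [CommRing R] [AddCommGroup V] [Module R V]

theorem mul_mul_eq_one_of_cyclic (T : Module.End R (V ⊗[R] (V ⊗[R] V)))
    (hT : ∀ u₁ u₂ u₃ : V, T (u₁ ⊗ₜ (u₂ ⊗ₜ u₃)) = u₃ ⊗ₜ (u₁ ⊗ₜ u₂)) : T * T * T = 1 :=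
  TensorProduct.ext_threefold' fun _ _ _ => by simp [hT]

variable [Module.Free R V] [Module.Finite R V]

theorem trace_mul_map_of_cyclic (T : Module.End R (V ⊗[R] (V ⊗[R] V)))
    (hT : ∀ u₁ u₂ u₃ : V, T (u₁ ⊗ₜ (u₂ ⊗ₜ u₃)) = u₃ ⊗ₜ (u₁ ⊗ₜ u₂)) (a₁ a₂ a₃ : Module.End R V) :
    LinearMap.trace R _ (T * map a₁ (map a₂ a₃)) = LinearMap.trace R V (a₃ * a₂ * a₁) := by
  classical
  let b := Module.Free.chooseBasis R V
  rw [LinearMap.trace_tensorProduct_threefold_eq_sum b b b, LinearMap.trace_eq_matrix_trace R b,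
    LinearMap.toMatrix_mul, LinearMap.toMatrix_mul]
  simp only [Module.End.mul_apply, map_tmul, hT, Module.Basis.tensorProduct_repr_tmul_apply,
    Matrix.trace, Matrix.diag, Matrix.mul_apply, LinearMap.toMatrix_apply, Finset.sum_mul,
    smul_eq_mul]
  exact Finset.sum_congr rfl fun _ _ => Finset.sum_congr rfl fun _ _ =>
    Finset.sum_congr rfl fun _ _ => by ring

theorem trace_mul_mul_map_of_cyclic (T : Module.End R (V ⊗[R] (V ⊗[R] V)))
    (hT : ∀ u₁ u₂ u₃ : V, T (u₁ ⊗ₜ (u₂ ⊗ₜ u₃)) = u₃ ⊗ₜ (u₁ ⊗ₜ u₂)) (a₁ a₂ a₃ : Module.End R V) :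
    LinearMap.trace R _ (T * T * map a₁ (map a₂ a₃)) = LinearMap.trace R V (a₁ * a₂ * a₃) := by
  classical
  let b := Module.Free.chooseBasis R V
  rw [← LinearMap.trace_mul_cycle (f := a₂) (g := a₃) (h := a₁),
    LinearMap.trace_tensorProduct_threefold_eq_sum b b b, LinearMap.trace_eq_matrix_trace R b,
    LinearMap.toMatrix_mul, LinearMap.toMatrix_mul]
  simp only [Module.End.mul_apply, map_tmul, hT, Module.Basis.tensorProduct_repr_tmul_apply,
    Matrix.trace, Matrix.diag, Matrix.mul_apply, LinearMap.toMatrix_apply, Finset.sum_mul,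
    smul_eq_mul]
  refine Finset.sum_congr rfl fun _ _ => ?_
  rw [Finset.sum_comm]
  exact Finset.sum_congr rfl fun _ _ => Finset.sum_congr rfl fun _ _ => by ring

end CyclicPermutation

theorem stmt12_general (k V : Type*) [Field k] [AddCommGroup V] [Module k V]
    [FiniteDimensional k V]
    (T : Module.End k (V ⊗[k] (V ⊗[k] V)))
    (hT : ∀ u₁ u₂ u₃ : V, T (u₁ ⊗ₜ (u₂ ⊗ₜ u₃)) = u₃ ⊗ₜ (u₁ ⊗ₜ u₂))
    (g h : Module.Dual k (Module.End k (V ⊗[k] (V ⊗[k] V))))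
    (hgdef : ∀ a₁ a₂ a₃ : Module.End k V,
      g (TensorProduct.map a₁ (TensorProduct.map a₂ a₃)) =
        LinearMap.trace k V (a₁ * a₂ * a₃) - LinearMap.trace k V (a₃ * a₂ * a₁))
    (hhdef : ∀ a₁ a₂ a₃ : Module.End k V,
      h (TensorProduct.map a₁ (TensorProduct.map a₂ a₃)) =
        LinearMap.trace k V a₁ * LinearMap.trace k V a₂ * LinearMap.trace k V a₃
          - LinearMap.trace k V (a₁ * a₂ * a₃)) :
    h = g ∘ₗ LinearMap.mulLeft k T := by
  have hg : g = LinearMap.trace k _ ∘ₗ LinearMap.mulLeft k (T * T - T) :=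
    TensorProduct.ext_on_map_threefold' fun a₁ a₂ a₃ => by
      rw [hgdef, LinearMap.comp_apply, LinearMap.mulLeft_apply, sub_mul, map_sub,
        trace_mul_mul_map_of_cyclic T hT, trace_mul_map_of_cyclic T hT]
  have hh : h = LinearMap.trace k _ ∘ₗ LinearMap.mulLeft k (1 - T * T) :=
    TensorProduct.ext_on_map_threefold' fun a₁ a₂ a₃ => by
      rw [hhdef, LinearMap.comp_apply, LinearMap.mulLeft_apply, sub_mul, one_mul, map_sub,
        trace_mul_mul_map_of_cyclic T hT, LinearMap.trace_tensorProduct',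
        LinearMap.trace_tensorProduct', mul_assoc]
  rw [hg, hh, LinearMap.comp_assoc, ← LinearMap.mulLeft_mul, sub_mul,
    mul_mul_eq_one_of_cyclic T hT]

/-- Let `V` be 2-dimensional. The trilinear forms
`g(a₁,a₂,a₃) = tr(a₁a₂a₃) − tr(a₃a₂a₁)` and
`h(a₁,a₂,a₃) = tr(a₁)tr(a₂)tr(a₃) − tr(a₁a₂a₃)`, viewed as linear forms on
`L(V)^{⊗3} ≅ L(V^{⊗3})`, satisfy `h = g ∘ L_{t_{(321)}}`, where `t_{(321)}` is the
endomorphism of `V^{⊗3}` sending `u₁⊗u₂⊗u₃` to `u₃⊗u₁⊗u₂` and `L` is left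
multiplication in `L(V^{⊗3})`. -/
theorem stmt12 (k V : Type*) [Field k] [AddCommGroup V] [Module k V]
    [FiniteDimensional k V] (hdim : Module.finrank k V = 2)
    (T : Module.End k (V ⊗[k] (V ⊗[k] V)))
    (hT : ∀ u₁ u₂ u₃ : V, T (u₁ ⊗ₜ (u₂ ⊗ₜ u₃)) = u₃ ⊗ₜ (u₁ ⊗ₜ u₂))
    (g h : Module.Dual k (Module.End k (V ⊗[k] (V ⊗[k] V))))
    (hgdef : ∀ a₁ a₂ a₃ : Module.End k V,
      g (TensorProduct.map a₁ (TensorProduct.map a₂ a₃)) =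
        LinearMap.trace k V (a₁ * a₂ * a₃) - LinearMap.trace k V (a₃ * a₂ * a₁))
    (hhdef : ∀ a₁ a₂ a₃ : Module.End k V,
      h (TensorProduct.map a₁ (TensorProduct.map a₂ a₃)) =
        LinearMap.trace k V a₁ * LinearMap.trace k V a₂ * LinearMap.trace k V a₃
          - LinearMap.trace k V (a₁ * a₂ * a₃)) :
    h = g ∘ₗ LinearMap.mulLeft k T :=
  stmt12_general k V T hT g h hgdef hhdef
end

section
/- For any finite-dimensional vector space U, vectors v₁,v₂,v₃ in U, forms λ₁,λ₂,λ₃ in U*, and permutation σ in S₃, the linear form on L(U^{⊗3}) given by composing ι*(v₁⊗λ₁) ⊗ ι*(v₂⊗λ₂) ⊗ ι*(v₃⊗λ₃) with left multiplication by t_σ equals ι*(v₁⊗λ_{σ⁻¹(1)}) ⊗ ι*(v₂⊗λ_{σ⁻¹(2)}) ⊗ ι*(v₃⊗λ_{σ⁻¹(3)}). -/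
/-!
Since `L(U)^{⊗3} → L(U^{⊗3})` is surjective, a form on `L(U^{⊗3})` is determined by its values on
the maps `a₁ ⊗ a₂ ⊗ a₃`; hence `ι*(v₁⊗λ₁) ⊗ ι*(v₂⊗λ₂) ⊗ ι*(v₃⊗λ₃)` is the form
`X ↦ (λ₁ ⊗ λ₂ ⊗ λ₃)(X (v₁ ⊗ v₂ ⊗ v₃))`. Composing it with left multiplication by `t_σ` replaces
`λ₁ ⊗ λ₂ ⊗ λ₃` by `(λ₁ ⊗ λ₂ ⊗ λ₃) ∘ t_σ = λ_{σ⁻¹(1)} ⊗ λ_{σ⁻¹(2)} ⊗ λ_{σ⁻¹(3)}`.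
-/

open TensorProduct Module LinearMap

namespace TensorProduct

variable {R M₁ M₂ M₃ N₁ N₂ N₃ W : Type*} [CommSemiring R]
  [AddCommMonoid M₁] [AddCommMonoid M₂] [AddCommMonoid M₃]
  [AddCommMonoid N₁] [AddCommMonoid N₂] [AddCommMonoid N₃] [AddCommMonoid W]
  [Module R M₁] [Module R M₂] [Module R M₃] [Module R N₁] [Module R N₂] [Module R N₃] [Module R W]
  [Projective R M₁] [Projective R M₂] [Projective R M₃]
  [Module.Finite R M₁] [Module.Finite R M₂] [Module.Finite R M₃]

theorem hom_ext_of_map {G G' : (M₁ ⊗[R] M₂ →ₗ[R] N₁ ⊗[R] N₂) →ₗ[R] W}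
    (h : ∀ f g, G (map f g) = G' (map f g)) : G = G' :=
  (cancel_right (homTensorHomEquiv R M₁ M₂ N₁ N₂).surjective).1 <|
    TensorProduct.ext' fun f g => by simpa using h f g

theorem hom_ext_of_map_map {G G' : (M₁ ⊗[R] (M₂ ⊗[R] M₃) →ₗ[R] N₁ ⊗[R] (N₂ ⊗[R] N₃)) →ₗ[R] W}
    (h : ∀ a₁ a₂ a₃, G (map a₁ (map a₂ a₃)) = G' (map a₁ (map a₂ a₃))) : G = G' :=
  hom_ext_of_map fun a₁ _ => LinearMap.congr_fun
    (hom_ext_of_map (G := G ∘ₗ mapBilinear (.id R) M₁ _ N₁ _ a₁)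
      (G' := G' ∘ₗ mapBilinear (.id R) M₁ _ N₁ _ a₁) (h a₁)) _

end TensorProduct

namespace Module.Dual

variable {R M : Type*} [CommSemiring R] [AddCommMonoid M] [Module R M]

noncomputable def tensor₃ (l : Fin 3 → Dual R M) : Dual R (M ⊗[R] (M ⊗[R] M)) :=
  dualDistrib R M _ (l 0 ⊗ₜ dualDistrib R M M (l 1 ⊗ₜ l 2))

@[simp]
theorem tensor₃_tmul (l : Fin 3 → Dual R M) (x y z : M) :
    tensor₃ l (x ⊗ₜ (y ⊗ₜ z)) = l 0 x * l 1 y * l 2 z := by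
  simp [tensor₃, mul_assoc]

theorem tensor₃_comp_perm {l : Fin 3 → Dual R M} {σ : Equiv.Perm (Fin 3)}
    {T : Module.End R (M ⊗[R] (M ⊗[R] M))}
    (hT : ∀ w : Fin 3 → M, T (w 0 ⊗ₜ (w 1 ⊗ₜ w 2)) = w (σ 0) ⊗ₜ (w (σ 1) ⊗ₜ w (σ 2))) :
    tensor₃ l ∘ₗ T = tensor₃ (fun t => l (σ⁻¹ t)) := by
  refine ext_threefold' fun x y z => ?_
  let w := ![x, y, z]
  calc tensor₃ l (T (w 0 ⊗ₜ (w 1 ⊗ₜ w 2)))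
      = ∏ t, l t (w (σ t)) := by rw [hT, tensor₃_tmul, Fin.prod_univ_three]
    _ = ∏ t, l (σ⁻¹ t) (w t) := by simpa using Equiv.prod_comp σ fun t => l (σ⁻¹ t) (w t)
    _ = tensor₃ (fun t => l (σ⁻¹ t)) (w 0 ⊗ₜ (w 1 ⊗ₜ w 2)) := by
      rw [tensor₃_tmul, Fin.prod_univ_three]

theorem eq_tensor₃_comp_applyₗ [Projective R M] [Module.Finite R M]
    {F : Dual R (Module.End R (M ⊗[R] (M ⊗[R] M)))} (v : Fin 3 → M) (l : Fin 3 → Dual R M)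
    (hF : ∀ a₁ a₂ a₃ : Module.End R M,
      F (map a₁ (map a₂ a₃)) = l 0 (a₁ (v 0)) * l 1 (a₂ (v 1)) * l 2 (a₃ (v 2))) :
    F = tensor₃ l ∘ₗ applyₗ (v 0 ⊗ₜ (v 1 ⊗ₜ v 2)) :=
  TensorProduct.hom_ext_of_map_map fun a₁ a₂ a₃ => by simp [hF]

end Module.Dual

/-- For vectors `v₁,v₂,v₃` in `U`, forms `λ₁,λ₂,λ₃` in `U*`, and a permutation
`σ ∈ S₃`, the linear form on `L(U^{⊗3})` obtained by composing
`ι*(v₁⊗λ₁) ⊗ ι*(v₂⊗λ₂) ⊗ ι*(v₃⊗λ₃)` with left multiplication by `t_σ`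
equals `ι*(v₁⊗λ_{σ⁻¹(1)}) ⊗ ι*(v₂⊗λ_{σ⁻¹(2)}) ⊗ ι*(v₃⊗λ_{σ⁻¹(3)})`,
where `ι*(v⊗λ)` is the form `a ↦ λ(a v)` on `L(U)` and tensor products of such
forms are viewed as forms on `L(U^{⊗3})` via `L(U)^{⊗3} ≅ L(U^{⊗3})`. -/
theorem stmt14 (k U : Type*) [Field k] [AddCommGroup U] [Module k U]
    [FiniteDimensional k U]
    (v : Fin 3 → U) (l : Fin 3 → Module.Dual k U) (σ : Equiv.Perm (Fin 3))
    (T : Module.End k (U ⊗[k] (U ⊗[k] U)))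
    (hT : ∀ w : Fin 3 → U,
      T (w 0 ⊗ₜ (w 1 ⊗ₜ w 2)) = w (σ 0) ⊗ₜ (w (σ 1) ⊗ₜ w (σ 2)))
    (F F' : Module.Dual k (Module.End k (U ⊗[k] (U ⊗[k] U))))
    (hF : ∀ a₁ a₂ a₃ : Module.End k U,
      F (TensorProduct.map a₁ (TensorProduct.map a₂ a₃)) =
        l 0 (a₁ (v 0)) * l 1 (a₂ (v 1)) * l 2 (a₃ (v 2)))
    (hF' : ∀ a₁ a₂ a₃ : Module.End k U,
      F' (TensorProduct.map a₁ (TensorProduct.map a₂ a₃)) =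
        l (σ⁻¹ 0) (a₁ (v 0)) * l (σ⁻¹ 1) (a₂ (v 1)) * l (σ⁻¹ 2) (a₃ (v 2))) :
    F ∘ₗ LinearMap.mulLeft k T = F' := by
  rw [Dual.eq_tensor₃_comp_applyₗ v l hF, Dual.eq_tensor₃_comp_applyₗ v (fun t => l (σ⁻¹ t)) hF',
    ← Dual.tensor₃_comp_perm hT]
  rfl
end

section
/- Let V be a 2-dimensional vector space over a field k. For i = 1,2,3, let vᵢ be nonzero vectors in V and λᵢ nonzero forms in V* with λᵢ(vᵢ) = 0, and set μᵢ = (a ↦ λᵢ(a(vᵢ))), a linear form on L(V). Then the following are equivalent: (1) the vᵢ are pairwise non-colinear; (2) the λᵢ are pairwise non-colinear; (3) μ₁, μ₂, μ₃ are linearly independent; (4) (μ₁, μ₂, μ₃) is a basis of the subspace of L(V)* of forms vanishing on the identity. -/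
/-!
In dimension two the kernel of `λᵢ` is the line `k vᵢ` and the forms killing `vᵢ` form the line
`k λᵢ`; hence `vᵢ ∈ k vⱼ` and `λⱼ ∈ k λᵢ` both say `λⱼ(vᵢ) = 0`, which gives (1) ⇔ (2).
If `vᵢ` and `vⱼ` are colinear, so are `λᵢ` and `λⱼ`, and `μᵢ = λᵢ ⊗ vᵢ` and `μⱼ = λⱼ ⊗ vⱼ` are
colinear. Conversely, if the `vᵢ` are pairwise non-colinear then `λⱼ(vᵢ) ≠ 0` for `i ≠ j`, and
evaluating on the rank-one maps `x ↦ λ_{i+1}(x) v_{i+2}` separates `μ₁, μ₂, μ₃`. Finally the `μᵢ`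
vanish at the identity, and the space of such forms has dimension `2² - 1 = 3`.
-/

open Module Submodule

section LinearAlgebra

variable {k W : Type*} [Field k] [AddCommGroup W] [Module k W]

theorem Submodule.mem_span_singleton_comm {x y : W} (hx : x ≠ 0) (h : x ∈ span k {y}) :
    y ∈ span k {x} := by
  obtain ⟨c, rfl⟩ := mem_span_singleton.mp h
  exact mem_span_singleton.mpr ⟨c⁻¹, inv_smul_smul₀ (left_ne_zero_of_smul hx) y⟩

theorem linearIndependent_of_pairwise_apply_eq_zero {ι : Type*} (μ : ι → Dual k W) (a : ι → W)
    (hoff : Pairwise fun i j ↦ μ j (a i) = 0) (hdiag : ∀ i, μ i (a i) ≠ 0) :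
    LinearIndependent k μ :=
  .of_pairwise_dual_eq_zero_one μ (fun i ↦ Dual.eval k W ((μ i (a i))⁻¹ • a i))
    (fun i j hij ↦ by simp [hoff hij]) (fun i ↦ by simp [hdiag i])

theorem Submodule.exists_basis_coe_eq_iff_linearIndependent {ι : Type*} [Fintype ι] [Nonempty ι]
    (K : Submodule k W) (hK : finrank k K = Fintype.card ι) {μ : ι → W} (hμ : ∀ i, μ i ∈ K) :
    (∃ b : Basis ι k K, ∀ i, (b i : W) = μ i) ↔ LinearIndependent k μ := by
  constructor
  · rintro ⟨b, hb⟩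
    simpa [Function.comp_def, hb] using b.linearIndependent.map' K.subtype K.ker_subtype
  · intro h
    have hK' : LinearIndependent k fun i ↦ (⟨μ i, hμ i⟩ : K) := .of_comp K.subtype h
    exact ⟨basisOfLinearIndependentOfCardEqFinrank hK' hK.symm, fun i ↦ by simp⟩

variable [FiniteDimensional k W]

theorem span_singleton_eq_ker_of_finrank_eq_two (hW : finrank k W = 2) {φ : Dual k W}
    (hφ : φ ≠ 0) {x : W} (hx : x ≠ 0) (hφx : φ x = 0) : span k {x} = LinearMap.ker φ := by
  refine eq_of_le_of_finrank_eq (by simpa [span_le] using hφx) ?_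
  have := Dual.finrank_ker_add_one_of_ne_zero hφ
  rw [finrank_span_singleton hx]
  omega

theorem span_singleton_eq_ker_eval_of_finrank_eq_two (hW : finrank k W = 2) {f : Dual k W}
    (hf : f ≠ 0) {x : W} (hx : x ≠ 0) (hfx : f x = 0) :
    span k {f} = LinearMap.ker (Dual.eval k W x) :=
  span_singleton_eq_ker_of_finrank_eq_two (by rw [Subspace.dual_finrank_eq, hW])
    ((eval_apply_eq_zero_iff k x).not.mpr hx) hf hfx

/-- Both sides say `g x = 0`. -/
theorem mem_span_singleton_iff_dual_mem_span_singleton (hW : finrank k W = 2)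
    {x y : W} {f g : Dual k W} (hx : x ≠ 0) (hy : y ≠ 0) (hf : f ≠ 0) (hg : g ≠ 0)
    (hfx : f x = 0) (hgy : g y = 0) : x ∈ span k {y} ↔ g ∈ span k {f} := by
  rw [span_singleton_eq_ker_of_finrank_eq_two hW hg hy hgy,
    span_singleton_eq_ker_eval_of_finrank_eq_two hW hf hx hfx]
  rfl

end LinearAlgebra

section RankOneForm

variable {k V : Type*} [Field k] [AddCommGroup V] [Module k V]

def rankOneForm : Dual k V →ₗ[k] V →ₗ[k] Dual k (End k V) :=
  (LinearMap.llcomp k (End k V) V k).compl₂ LinearMap.applyₗ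

@[simp]
theorem rankOneForm_apply (f : Dual k V) (x : V) (a : End k V) :
    rankOneForm f x a = f (a x) :=
  rfl

theorem rankOneForm_mem_span_singleton {f f' : Dual k V} {x x' : V} (hf : f ∈ span k {f'})
    (hx : x ∈ span k {x'}) : rankOneForm f x ∈ span k {rankOneForm f' x'} := by
  obtain ⟨c, rfl⟩ := mem_span_singleton.mp hf
  obtain ⟨d, rfl⟩ := mem_span_singleton.mp hx
  rw [map_smul, LinearMap.map_smul₂, smul_smul]
  exact smul_mem _ _ (mem_span_singleton_self _)

theorem finrank_ker_eval_one_add_one [FiniteDimensional k V] [Nontrivial V] :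
    finrank k (LinearMap.ker (Dual.eval k (End k V) 1)) + 1 = finrank k V * finrank k V := by
  rw [Dual.finrank_ker_add_one_of_ne_zero ((eval_apply_eq_zero_iff k _).not.mpr one_ne_zero),
    Subspace.dual_finrank_eq, finrank_linearMap]

end RankOneForm

section Configuration

variable {k V : Type*} [Field k] [AddCommGroup V] [Module k V] [FiniteDimensional k V]
  (hdim : finrank k V = 2) {ι : Type*} {v : ι → V} {lam : ι → Dual k V}
  (hv : ∀ i, v i ≠ 0) (hlam : ∀ i, lam i ≠ 0) (hzero : ∀ i, lam i (v i) = 0)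
include hdim hv hlam hzero

theorem pairwise_notMem_span_iff_dual :
    (∀ i j, i ≠ j → v i ∉ span k {v j}) ↔ (∀ i j, i ≠ j → lam i ∉ span k {lam j}) := by
  simp only [mem_span_singleton_iff_dual_mem_span_singleton hdim (hv _) (hv _) (hlam _) (hlam _)
    (hzero _) (hzero _)]
  exact ⟨fun h i j hij ↦ h j i hij.symm, fun h i j hij ↦ h j i hij.symm⟩

theorem pairwise_notMem_span_of_linearIndependent
    (h : LinearIndependent k fun i ↦ rankOneForm (lam i) (v i)) (i j : ι) (hij : i ≠ j) :
    v i ∉ span k {v j} := by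
  intro hvij
  have hlamij : lam i ∈ span k {lam j} :=
    (mem_span_singleton_iff_dual_mem_span_singleton hdim (hv j) (hv i) (hlam j) (hlam i)
      (hzero j) (hzero i)).mp (mem_span_singleton_comm (hv i) hvij)
  have := h.notMem_span_image (s := {j}) (x := i) (by simpa using hij)
  rw [Set.image_singleton] at this
  exact this (rankOneForm_mem_span_singleton hlamij hvij)

end Configuration

section ThreeForms

variable {k V : Type*} [Field k] [AddCommGroup V] [Module k V] [FiniteDimensional k V]

/-- The test maps `x ↦ λ_{i+1}(x) v_{i+2}` are killed by `μⱼ` for `j ≠ i` and not by `μᵢ`. -/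
theorem linearIndependent_rankOneForm_of_pairwise_notMem_span (hdim : finrank k V = 2)
    {v : Fin 3 → V} {lam : Fin 3 → Dual k V} (hv : ∀ i, v i ≠ 0) (hlam : ∀ i, lam i ≠ 0)
    (hzero : ∀ i, lam i (v i) = 0) (h : ∀ i j, i ≠ j → v i ∉ span k {v j}) :
    LinearIndependent k fun i ↦ rankOneForm (lam i) (v i) := by
  have hne : ∀ i j, i ≠ j → lam i (v j) ≠ 0 := fun i j hij hij0 ↦ h j i hij.symm <| by
    rwa [span_singleton_eq_ker_of_finrank_eq_two hdim (hlam i) (hv i) (hzero i)]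
  have hcyc : ∀ i j : Fin 3, i ≠ j → j = i + 1 ∨ j = i + 2 := by decide
  refine linearIndependent_of_pairwise_apply_eq_zero _
    (fun i ↦ (lam (i + 1)).smulRight (v (i + 2))) (fun i j hij ↦ ?_) (fun i ↦ ?_)
  · obtain rfl | rfl := hcyc i j hij <;> simp [hzero]
  · simpa using mul_ne_zero (hne (i + 1) i (by decide +revert)) (hne i (i + 2) (by decide +revert))

end ThreeForms

/-- Equivalent conditions for rank-one forms to give a basis of `Q*`.
`V` is 2-dimensional; `vᵢ` are nonzero vectors, `λᵢ` nonzero forms with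
`λᵢ(vᵢ) = 0`, and `μᵢ(a) = λᵢ(a vᵢ)`. The dual `Q*` of `Q = L(V)/kI` is
identified with the subspace of forms on `L(V)` vanishing at the identity. -/
theorem stmt15 (k V : Type*) [Field k] [AddCommGroup V] [Module k V]
    [FiniteDimensional k V] (hdim : Module.finrank k V = 2)
    (v : Fin 3 → V) (lam : Fin 3 → Module.Dual k V)
    (hv : ∀ i, v i ≠ 0) (hlam : ∀ i, lam i ≠ 0)
    (hzero : ∀ i, lam i (v i) = 0)
    (μ : Fin 3 → Module.Dual k (Module.End k V))
    (hμ : ∀ i (a : Module.End k V), μ i a = lam i (a (v i))) :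
    ((∀ i j, i ≠ j → v i ∉ Submodule.span k {v j}) ↔
      (∀ i j, i ≠ j → lam i ∉ Submodule.span k {lam j})) ∧
    ((∀ i j, i ≠ j → lam i ∉ Submodule.span k {lam j}) ↔
      LinearIndependent k μ) ∧
    (LinearIndependent k μ ↔
      ∃ b : Module.Basis (Fin 3) k
        (LinearMap.ker ((Module.Dual.eval k (Module.End k V))
          (1 : Module.End k V))),
        ∀ i, (b i : Module.Dual k (Module.End k V)) = μ i) := by
  obtain rfl : μ = fun i ↦ rankOneForm (lam i) (v i) := funext fun i ↦ LinearMap.ext (hμ i)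
  have h12 := pairwise_notMem_span_iff_dual hdim hv hlam hzero
  have h13 : (∀ i j, i ≠ j → v i ∉ span k {v j}) ↔ LinearIndependent k _ :=
    ⟨linearIndependent_rankOneForm_of_pairwise_notMem_span hdim hv hlam hzero,
      pairwise_notMem_span_of_linearIndependent hdim hv hlam hzero⟩
  have : Nontrivial V := nontrivial_of_finrank_eq_succ hdim
  refine ⟨h12, h12.symm.trans h13, (exists_basis_coe_eq_iff_linearIndependent _ ?_ ?_).symm⟩
  · have := finrank_ker_eval_one_add_one (k := k) (V := V)
    rw [hdim] at this
    rw [Fintype.card_fin]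
    omega
  · simp [hzero]
end

section
/- Let V be a 2-dimensional vector space over a field k, and let v₁,v₂,v₃ in V and λ₁,λ₂,λ₃ in V* satisfy λᵢ(vᵢ) = 0, all nonzero, with the vᵢ pairwise non-colinear. Then for all endomorphisms a₁,a₂,a₃ of V: tr(a₁a₂a₃) = tr(a₁)tr(a₂)tr(a₃) + (λ₁(v₂)λ₂(v₃)λ₃(v₁))⁻¹ · Σ_{σ ∈ S₃} ε(σ) ∏_{i=1,2,3} λ_{(σ∘(123))(i)}(aᵢ(v_{σ(i)})), where (123) denotes the 3-cycle sending 1↦2, 2↦3, 3↦1 and ε is the sign of the permutation. -/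
set_option maxHeartbeats 2000000 in
/-- Rank-7 decomposition of the trilinear form `tr(a₁a₂a₃)`:
`tr(a₁a₂a₃) = tr(a₁)tr(a₂)tr(a₃)
 + (λ₁(v₂)λ₂(v₃)λ₃(v₁))⁻¹ Σ_{σ∈S₃} ε(σ) ∏ᵢ λ_{(σ∘(123))(i)}(aᵢ(v_{σ(i)}))`,
where `(123)` is the 3-cycle `1↦2, 2↦3, 3↦1` (on `Fin 3`: `finRotate 3`). -/
theorem stmt17 (k V : Type*) [Field k] [AddCommGroup V] [Module k V]
    [FiniteDimensional k V] (hdim : Module.finrank k V = 2)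
    (v : Fin 3 → V) (lam : Fin 3 → Module.Dual k V)
    (hv : ∀ i, v i ≠ 0) (hlam : ∀ i, lam i ≠ 0)
    (hzero : ∀ i, lam i (v i) = 0)
    (hnc : ∀ i j, i ≠ j → v i ∉ Submodule.span k {v j})
    (a : Fin 3 → Module.End k V) :
    LinearMap.trace k V (a 0 * a 1 * a 2) =
      LinearMap.trace k V (a 0) * LinearMap.trace k V (a 1) *
        LinearMap.trace k V (a 2)
      + (lam 0 (v 1) * lam 1 (v 2) * lam 2 (v 0))⁻¹ *
        ∑ σ : Equiv.Perm (Fin 3), ((Equiv.Perm.sign σ : ℤ) : k) *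
          ∏ i : Fin 3, lam ((σ * finRotate 3) i) ((a i) (v (σ i))) := by

  -- basis from v 0, v 1
  have hli : LinearIndependent k ![v 0, v 1] := by
    rw [LinearIndependent.pair_iff' (hv 0)]
    intro c hc
    exact hnc 1 0 (by decide) (hc ▸ Submodule.smul_mem _ c (Submodule.mem_span_singleton_self _))
  have hcard : Fintype.card (Fin 2) = Module.finrank k V := by simp [hdim]
  set B := basisOfLinearIndependentOfCardEqFinrank hli hcard with hBdef
  have hB0 : B 0 = v 0 := by rw [hBdef, coe_basisOfLinearIndependentOfCardEqFinrank]; rfl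
  have hB1 : B 1 = v 1 := by rw [hBdef, coe_basisOfLinearIndependentOfCardEqFinrank]; rfl
  have hx : ∀ x : V, x = B.repr x 0 • v 0 + B.repr x 1 • v 1 := by
    intro x
    conv_lhs => rw [← B.sum_repr x]
    rw [Fin.sum_univ_two, hB0, hB1]
  have hr00 : B.repr (v 0) 0 = 1 := by rw [← hB0]; simp
  have hr01 : B.repr (v 0) 1 = 0 := by rw [← hB0]; simp [Finsupp.single_apply]
  have hr10 : B.repr (v 1) 0 = 0 := by rw [← hB1]; simp [Finsupp.single_apply]
  have hr11 : B.repr (v 1) 1 = 1 := by rw [← hB1]; simp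
  -- lam expansions
  have hl0 : ∀ x : V, lam 0 x = lam 0 (v 1) * B.repr x 1 := by
    intro x
    conv_lhs => rw [hx x]
    rw [map_add, map_smul, map_smul, hzero 0, smul_eq_mul, smul_eq_mul]
    ring
  have hl1 : ∀ x : V, lam 1 x = lam 1 (v 0) * B.repr x 0 := by
    intro x
    conv_lhs => rw [hx x]
    rw [map_add, map_smul, map_smul, hzero 1, smul_eq_mul, smul_eq_mul]
    ring
  have hl2 : ∀ x : V, lam 2 x = lam 2 (v 0) * B.repr x 0 + lam 2 (v 1) * B.repr x 1 := by
    intro x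
    conv_lhs => rw [hx x]
    rw [map_add, map_smul, map_smul, smul_eq_mul, smul_eq_mul]
    ring
  -- nonvanishing scalars
  have hα : lam 0 (v 1) ≠ 0 := by
    intro h
    exact hlam 0 (LinearMap.ext fun x => by rw [hl0 x, h, zero_mul]; rfl)
  have hβ : lam 1 (v 0) ≠ 0 := by
    intro h
    exact hlam 1 (LinearMap.ext fun x => by rw [hl1 x, h, zero_mul]; rfl)
  have hc0 : B.repr (v 2) 0 ≠ 0 := by
    intro h
    refine hnc 2 1 (by decide) ?_
    rw [hx (v 2), h, zero_smul, zero_add]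
    exact Submodule.smul_mem _ _ (Submodule.mem_span_singleton_self _)
  have hc1 : B.repr (v 2) 1 ≠ 0 := by
    intro h
    refine hnc 2 0 (by decide) ?_
    rw [hx (v 2), h, zero_smul, add_zero]
    exact Submodule.smul_mem _ _ (Submodule.mem_span_singleton_self _)
  have hrel : lam 2 (v 0) * B.repr (v 2) 0 + lam 2 (v 1) * B.repr (v 2) 1 = 0 := by
    rw [← hl2 (v 2)]; exact hzero 2
  have hγ0 : lam 2 (v 0) ≠ 0 := by
    intro h
    have h1 : lam 2 (v 1) = 0 := by
      have := hrel
      rw [h, zero_mul, zero_add] at this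
      exact (mul_eq_zero.mp this).resolve_right hc1
    exact hlam 2 (LinearMap.ext fun x => by
      rw [hl2 x, h, h1, zero_mul, zero_mul, add_zero]; rfl)
  -- repr of a i (v 2)
  have h2 : ∀ (i : Fin 3) (p : Fin 2), B.repr (a i (v 2)) p
      = B.repr (v 2) 0 * B.repr (a i (v 0)) p + B.repr (v 2) 1 * B.repr (a i (v 1)) p := by
    intro i p
    conv_lhs => rw [hx (v 2), map_add, map_smul, map_smul, map_add, map_smul, map_smul]
    simp
  -- lam's applied to a i (v n)
  have hL0 : ∀ (i n : Fin 3), lam 0 (a i (v n)) = lam 0 (v 1) * B.repr (a i (v n)) 1 :=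
    fun i n => hl0 _
  have hL1 : ∀ (i n : Fin 3), lam 1 (a i (v n)) = lam 1 (v 0) * B.repr (a i (v n)) 0 :=
    fun i n => hl1 _
  have hL2 : ∀ (i n : Fin 3), lam 2 (a i (v n)) =
      lam 2 (v 0) * B.repr (a i (v n)) 0 + lam 2 (v 1) * B.repr (a i (v n)) 1 :=
    fun i n => hl2 _
  have hl1v2 : lam 1 (v 2) = lam 1 (v 0) * B.repr (v 2) 0 := hl1 _
  -- enumerate the permutations
  have huniv : (Finset.univ : Finset (Equiv.Perm (Fin 3))) =
      {(1 : Equiv.Perm (Fin 3)), finRotate 3, finRotate 3 * finRotate 3,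
       Equiv.swap (0:Fin 3) 1, Equiv.swap (0:Fin 3) 1 * finRotate 3,
       Equiv.swap (0:Fin 3) 1 * (finRotate 3 * finRotate 3)} := by decide
  have hp1c0 : (((1 : Equiv.Perm (Fin 3))) * finRotate 3) (0:Fin 3) = 1 := by decide
  have hp1a0 : ((1 : Equiv.Perm (Fin 3))) (0:Fin 3) = 0 := by decide
  have hp1c1 : (((1 : Equiv.Perm (Fin 3))) * finRotate 3) (1:Fin 3) = 2 := by decide
  have hp1a1 : ((1 : Equiv.Perm (Fin 3))) (1:Fin 3) = 1 := by decide
  have hp1c2 : (((1 : Equiv.Perm (Fin 3))) * finRotate 3) (2:Fin 3) = 0 := by decide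
  have hp1a2 : ((1 : Equiv.Perm (Fin 3))) (2:Fin 3) = 2 := by decide
  have hp1s : Equiv.Perm.sign ((1 : Equiv.Perm (Fin 3))) = 1 := by decide
  have hp2c0 : ((finRotate 3) * finRotate 3) (0:Fin 3) = 2 := by decide
  have hp2a0 : (finRotate 3) (0:Fin 3) = 1 := by decide
  have hp2c1 : ((finRotate 3) * finRotate 3) (1:Fin 3) = 0 := by decide
  have hp2a1 : (finRotate 3) (1:Fin 3) = 2 := by decide
  have hp2c2 : ((finRotate 3) * finRotate 3) (2:Fin 3) = 1 := by decide
  have hp2a2 : (finRotate 3) (2:Fin 3) = 0 := by decide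
  have hp2s : Equiv.Perm.sign (finRotate 3) = 1 := by decide
  have hp3c0 : ((finRotate 3 * finRotate 3) * finRotate 3) (0:Fin 3) = 0 := by decide
  have hp3a0 : (finRotate 3 * finRotate 3) (0:Fin 3) = 2 := by decide
  have hp3c1 : ((finRotate 3 * finRotate 3) * finRotate 3) (1:Fin 3) = 1 := by decide
  have hp3a1 : (finRotate 3 * finRotate 3) (1:Fin 3) = 0 := by decide
  have hp3c2 : ((finRotate 3 * finRotate 3) * finRotate 3) (2:Fin 3) = 2 := by decide
  have hp3a2 : (finRotate 3 * finRotate 3) (2:Fin 3) = 1 := by decide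
  have hp3s : Equiv.Perm.sign (finRotate 3 * finRotate 3) = 1 := by decide
  have hp4c0 : ((Equiv.swap (0:Fin 3) 1) * finRotate 3) (0:Fin 3) = 0 := by decide
  have hp4a0 : (Equiv.swap (0:Fin 3) 1) (0:Fin 3) = 1 := by decide
  have hp4c1 : ((Equiv.swap (0:Fin 3) 1) * finRotate 3) (1:Fin 3) = 2 := by decide
  have hp4a1 : (Equiv.swap (0:Fin 3) 1) (1:Fin 3) = 0 := by decide
  have hp4c2 : ((Equiv.swap (0:Fin 3) 1) * finRotate 3) (2:Fin 3) = 1 := by decide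
  have hp4a2 : (Equiv.swap (0:Fin 3) 1) (2:Fin 3) = 2 := by decide
  have hp4s : Equiv.Perm.sign (Equiv.swap (0:Fin 3) 1) = -1 := by decide
  have hp5c0 : ((Equiv.swap (0:Fin 3) 1 * finRotate 3) * finRotate 3) (0:Fin 3) = 2 := by decide
  have hp5a0 : (Equiv.swap (0:Fin 3) 1 * finRotate 3) (0:Fin 3) = 0 := by decide
  have hp5c1 : ((Equiv.swap (0:Fin 3) 1 * finRotate 3) * finRotate 3) (1:Fin 3) = 1 := by decide
  have hp5a1 : (Equiv.swap (0:Fin 3) 1 * finRotate 3) (1:Fin 3) = 2 := by decide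
  have hp5c2 : ((Equiv.swap (0:Fin 3) 1 * finRotate 3) * finRotate 3) (2:Fin 3) = 0 := by decide
  have hp5a2 : (Equiv.swap (0:Fin 3) 1 * finRotate 3) (2:Fin 3) = 1 := by decide
  have hp5s : Equiv.Perm.sign (Equiv.swap (0:Fin 3) 1 * finRotate 3) = -1 := by decide
  have hp6c0 : ((Equiv.swap (0:Fin 3) 1 * (finRotate 3 * finRotate 3)) * finRotate 3) (0:Fin 3) = 1 := by decide
  have hp6a0 : (Equiv.swap (0:Fin 3) 1 * (finRotate 3 * finRotate 3)) (0:Fin 3) = 2 := by decide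
  have hp6c1 : ((Equiv.swap (0:Fin 3) 1 * (finRotate 3 * finRotate 3)) * finRotate 3) (1:Fin 3) = 0 := by decide
  have hp6a1 : (Equiv.swap (0:Fin 3) 1 * (finRotate 3 * finRotate 3)) (1:Fin 3) = 1 := by decide
  have hp6c2 : ((Equiv.swap (0:Fin 3) 1 * (finRotate 3 * finRotate 3)) * finRotate 3) (2:Fin 3) = 2 := by decide
  have hp6a2 : (Equiv.swap (0:Fin 3) 1 * (finRotate 3 * finRotate 3)) (2:Fin 3) = 0 := by decide
  have hp6s : Equiv.Perm.sign (Equiv.swap (0:Fin 3) 1 * (finRotate 3 * finRotate 3)) = -1 := by decide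
  -- expand traces
  rw [show a 0 * a 1 * a 2 = (a 0 * a 1 * a 2 : V →ₗ[k] V) from rfl]
  simp only [LinearMap.trace_eq_matrix_trace k B, LinearMap.toMatrix_mul,
    Matrix.trace_fin_two, Matrix.mul_apply, Fin.sum_univ_two, LinearMap.toMatrix_apply,
    hB0, hB1]
  -- expand the permutation sum
  rw [huniv]
  rw [Finset.sum_insert (by decide), Finset.sum_insert (by decide),
    Finset.sum_insert (by decide), Finset.sum_insert (by decide),
    Finset.sum_insert (by decide), Finset.sum_singleton]
  simp only [Fin.prod_univ_three, hp1c0, hp1a0, hp1c1, hp1a1, hp1c2, hp1a2, hp1s, hp2c0, hp2a0, hp2c1, hp2a1, hp2c2, hp2a2, hp2s, hp3c0, hp3a0, hp3c1, hp3a1, hp3c2, hp3a2, hp3s, hp4c0, hp4a0, hp4c1, hp4a1, hp4c2, hp4a2, hp4s, hp5c0, hp5a0, hp5c1, hp5a1, hp5c2, hp5a2, hp5s, hp6c0, hp6a0, hp6c1, hp6a1, hp6c2, hp6a2, hp6s]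
  simp only [hL0, hL1, hL2, hl1v2, h2, hr00, hr01, hr10, hr11]
  simp only [Units.val_one, Units.val_neg, Int.cast_one, Int.cast_neg]
  have hC : lam 0 (v 1) * (lam 1 (v 0) * (B.repr (v 2)) 0) * lam 2 (v 0) ≠ 0 :=
    mul_ne_zero (mul_ne_zero hα (mul_ne_zero hβ hc0)) hγ0
  rw [← sub_eq_iff_eq_add', eq_inv_mul_iff_mul_eq₀ hC]
  apply mul_right_cancel₀ hc1
  linear_combination (-(((B.repr ((a 0) (v 0))) 0) * ((B.repr ((a 1) (v 1))) 1) * ((B.repr ((a 2) (v 1))) 1) * (lam 0 (v 1)) * (lam 1 (v 0)) * ((B.repr (v 2)) 1) + (-1) * ((B.repr ((a 0) (v 1))) 0) * ((B.repr ((a 1) (v 1))) 1) * ((B.repr ((a 2) (v 0))) 1) * (lam 0 (v 1)) * (lam 1 (v 0)) * ((B.repr (v 2)) 1) + (-1) * ((B.repr ((a 0) (v 0))) 1) * ((B.repr ((a 1) (v 1))) 0) * ((B.repr ((a 2) (v 1))) 1) * (lam 0 (v 1)) * (lam 1 (v 0)) * ((B.repr (v 2)) 1) + ((B.repr ((a 0)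 (v 1))) 1) * ((B.repr ((a 1) (v 0))) 0) * ((B.repr ((a 2) (v 1))) 1) * (lam 0 (v 1)) * (lam 1 (v 0)) * ((B.repr (v 2)) 1) + (-1) * ((B.repr ((a 0) (v 1))) 1) * ((B.repr ((a 1) (v 0))) 1) * ((B.repr ((a 2) (v 1))) 0) * (lam 0 (v 1)) * (lam 1 (v 0)) * ((B.repr (v 2)) 1) + ((B.repr ((a 0) (v 1))) 1) * ((B.repr ((a 1) (v 1))) 1) * ((B.repr ((a 2) (v 0))) 0) * (lam 0 (v 1)) * (lam 1 (v 0)) * ((B.repr (v 2)) 1))) * hrel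
end

section
/- Let V be a 2-dimensional vector space over a field k, and let v₁,v₂,v₃ in V and λ₁,λ₂,λ₃ in V* satisfy λᵢ(vᵢ)=0, all nonzero, with vᵢ pairwise non-colinear. Define c_{i,j} in L(V) by c_{i,j}(u) = λⱼ(u)·vᵢ. Then for all a₁, a₂ in L(V): a₁a₂ = tr(a₁)tr(a₂)·I + (λ₁(v₂)λ₂(v₃)λ₃(v₁))⁻¹ · Σ_{σ∈S₃} ε(σ) · tr(a₁ c_{σ(1),σ(2)}) · tr(a₂ c_{σ(2),σ(3)}) · c_{σ(3),σ(1)}. In particular this expresses the product of two 2×2 matrices as a sum of 7 terms, each a product of a scalar bilinear in (a₁,a₂) with a fixed matrix. -/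
/-!
In dimension two, `λᵢ(vᵢ) = 0` forces `λᵢ = μᵢ · det(vᵢ, ·)` for a scalar `μᵢ`. In coordinates,
the identity multiplied by `λ₁(v₂)λ₂(v₃)λ₃(v₁)` then becomes a polynomial identity in the entries
of `a₁`, `a₂`, the coordinates of the `vᵢ` and the `μᵢ`, which holds over any commutative ring.
That product is nonzero because a nonzero form on a plane vanishing at `vᵢ` vanishes at no vector
off the line `k vᵢ`.
-/

open Equiv Matrix Module Submodule

theorem Equiv.Perm.sum_fin_three {M : Type*} [AddCommMonoid M]
    (f : ℤˣ → Fin 3 → Fin 3 → Fin 3 → M) :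
    ∑ σ : Perm (Fin 3), f (Perm.sign σ) (σ 0) (σ 1) (σ 2) =
      f 1 0 1 2 + f 1 1 2 0 + f 1 2 0 1 + f (-1) 1 0 2 + f (-1) 2 1 0 + f (-1) 0 2 1 := by
  have huniv : (Finset.univ : Finset (Perm (Fin 3))) =
      {1, swap 0 1 * swap 1 2, swap 0 2 * swap 1 2, swap 0 1, swap 0 2, swap 1 2} := by decide
  rw [huniv]
  simp +decide [Finset.sum_insert, swap_apply_of_ne_of_ne, add_assoc]

theorem exists_eq_smul_of_dotProduct_eq_zero_fin_two {K : Type*} [Field K] {w L : Fin 2 → K}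
    (hw : w ≠ 0) (hL : L ⬝ᵥ w = 0) : ∃ μ : K, L = μ • ![-w 1, w 0] := by
  rw [dotProduct, Fin.sum_univ_two] at hL
  by_cases h0 : w 0 = 0
  · have h1 : w 1 ≠ 0 := fun h1 => hw (funext fun i => by fin_cases i <;> simp [h0, h1])
    refine ⟨-L 0 / w 1, funext fun i => ?_⟩
    fin_cases i
    · simp [h1]
    · simp only [Fin.mk_one, Pi.smul_apply, cons_val_one, cons_val_fin_one, smul_eq_mul]
      field_simp
      linear_combination hL
  · refine ⟨L 1 / w 0, funext fun i => ?_⟩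
    fin_cases i
    · simp only [Fin.zero_eta, Pi.smul_apply, cons_val_zero, smul_eq_mul, mul_neg]
      field_simp
      linear_combination hL
    · simp [h0]

theorem Matrix.smul_mul_sub_trace_mul_trace_eq_sum_perm_fin_two {R : Type*} [CommRing R]
    (w L : Fin 3 → Fin 2 → R) (μ : Fin 3 → R) (hL : ∀ i, L i = μ i • ![-w i 1, w i 0])
    (A B : Matrix (Fin 2) (Fin 2) R) :
    (L 0 ⬝ᵥ w 1 * (L 1 ⬝ᵥ w 2) * (L 2 ⬝ᵥ w 0)) • (A * B - (A.trace * B.trace) • 1) =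
      ∑ σ : Perm (Fin 3), (((Perm.sign σ : ℤ) : R) * (A * vecMulVec (w (σ 0)) (L (σ 1))).trace *
        (B * vecMulVec (w (σ 1)) (L (σ 2))).trace) • vecMulVec (w (σ 2)) (L (σ 0)) := by
  rw [Perm.sum_fin_three fun s i j l => (((s : ℤ) : R) * (A * vecMulVec (w i) (L j)).trace *
    (B * vecMulVec (w j) (L l)).trace) • vecMulVec (w l) (L i)]
  ext m n
  fin_cases m <;> fin_cases n <;>
  · simp only [hL, one_fin_two, add_apply, sub_apply, smul_apply, smul_eq_mul, mul_apply, of_apply,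
      Fin.sum_univ_two, trace_fin_two, vecMulVec_apply, Pi.smul_apply, dotProduct, Units.val_one,
      Units.val_neg, Int.cast_one, Int.cast_neg, cons_val', cons_val_zero, cons_val_one,
      cons_val_fin_one, empty_val', Fin.zero_eta, Fin.mk_one, Fin.isValue]
    ring

theorem Matrix.mul_eq_trace_mul_trace_smul_one_add_sum_perm_fin_two {K : Type*} [Field K]
    (w L : Fin 3 → Fin 2 → K) (hwL : ∀ i, L i ⬝ᵥ w i = 0)
    (hD : L 0 ⬝ᵥ w 1 * (L 1 ⬝ᵥ w 2) * (L 2 ⬝ᵥ w 0) ≠ 0) (A B : Matrix (Fin 2) (Fin 2) K) :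
    A * B = (A.trace * B.trace) • 1 + (L 0 ⬝ᵥ w 1 * (L 1 ⬝ᵥ w 2) * (L 2 ⬝ᵥ w 0))⁻¹ •
      ∑ σ : Perm (Fin 3), (((Perm.sign σ : ℤ) : K) * (A * vecMulVec (w (σ 0)) (L (σ 1))).trace *
        (B * vecMulVec (w (σ 1)) (L (σ 2))).trace) • vecMulVec (w (σ 2)) (L (σ 0)) := by
  have hw : ∀ i, w i ≠ 0 := by
    intro i hi
    fin_cases i <;> simp_all
  choose μ hμ using fun i => exists_eq_smul_of_dotProduct_eq_zero_fin_two (hw i) (hwL i)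
  rw [← smul_mul_sub_trace_mul_trace_eq_sum_perm_fin_two w L μ hμ, inv_smul_smul₀ hD,
    add_sub_cancel]

theorem LinearIndependent.pair_of_notMem_span {K V : Type*} [Field K] [AddCommGroup V]
    [Module K V] {x y : V} (hxy : x ∉ span K {y}) (hyx : y ∉ span K {x}) :
    LinearIndependent K ![x, y] :=
  linearIndependent_fin2.2
    ⟨fun hy => hyx <| by simp_all, fun a h => hxy (mem_span_singleton.2 ⟨a, h⟩)⟩

theorem Module.Dual.eq_zero_of_linearIndependent {K V ι : Type*} [Field K] [AddCommGroup V]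
    [Module K V] [FiniteDimensional K V] [Fintype ι] {x : ι → V} (hx : LinearIndependent K x)
    (hcard : Fintype.card ι = finrank K V) {f : Dual K V} (hf : ∀ i, f (x i) = 0) : f = 0 :=
  (basisOfLinearIndependentOfCardEqFinrank' x hx hcard).ext fun i => by simpa using hf i

theorem Module.Dual.apply_eq_dotProduct_repr {R M ι : Type*} [CommSemiring R]
    [AddCommMonoid M] [Module R M] [Fintype ι] (b : Basis ι R M) (f : Dual R M) (x : M) :
    f x = (f ∘ b) ⬝ᵥ b.repr x := by
  conv_lhs => rw [← b.sum_repr x]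
  simp only [map_sum, map_smul, smul_eq_mul, dotProduct, Function.comp_apply, mul_comm]

theorem stmt18_general (k V : Type*) [Field k] [AddCommGroup V] [Module k V]
    (hdim : Module.finrank k V = 2)
    (v : Fin 3 → V) (lam : Fin 3 → Module.Dual k V)
    (hlam : ∀ i, lam i ≠ 0)
    (hzero : ∀ i, lam i (v i) = 0)
    (hnc : ∀ i j, i ≠ j → v i ∉ Submodule.span k {v j})
    (c : Fin 3 → Fin 3 → Module.End k V)
    (hc : ∀ i j (u : V), c i j u = lam j u • v i)
    (a₁ a₂ : Module.End k V) :
    a₁ * a₂ =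
      (LinearMap.trace k V a₁ * LinearMap.trace k V a₂) • (1 : Module.End k V)
      + (lam 0 (v 1) * lam 1 (v 2) * lam 2 (v 0))⁻¹ •
        ∑ σ : Equiv.Perm (Fin 3),
          (((Equiv.Perm.sign σ : ℤ) : k) *
            LinearMap.trace k V (a₁ * c (σ 0) (σ 1)) *
            LinearMap.trace k V (a₂ * c (σ 1) (σ 2))) • c (σ 2) (σ 0) := by
  have : Module.Finite k V := Module.finite_of_finrank_eq_succ hdim
  have hne : ∀ i j, i ≠ j → lam i (v j) ≠ 0 := fun i j hij hj =>
    hlam i <| Dual.eq_zero_of_linearIndependent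
      (.pair_of_notMem_span (hnc i j hij) (hnc j i hij.symm)) (by simp [hdim])
      (Fin.forall_fin_two.2 ⟨hzero i, hj⟩)
  let b := Module.finBasisOfFinrankEq k V hdim
  have hcb : ∀ i j, LinearMap.toMatrix b b (c i j) = vecMulVec (b.repr (v i)) (lam j ∘ b) := by
    intro i j
    rw [← LinearMap.toMatrix_smulRight]
    congr 1
    exact LinearMap.ext (hc i j)
  simp only [Dual.apply_eq_dotProduct_repr b] at hne hzero ⊢
  apply (LinearMap.toMatrix b b).injective
  simp only [map_add, map_smul, map_sum, LinearMap.toMatrix_mul, LinearMap.toMatrix_one,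
    LinearMap.trace_eq_matrix_trace k b, hcb]
  exact mul_eq_trace_mul_trace_smul_one_add_sum_perm_fin_two _ _ hzero
    (mul_ne_zero (mul_ne_zero (hne 0 1 (by decide)) (hne 1 2 (by decide))) (hne 2 0 (by decide)))
    _ _

/-- Rank-7 decomposition of matrix multiplication (Strassen form): with
`c_{i,j} = ι(vᵢ ⊗ λⱼ) : u ↦ λⱼ(u) • vᵢ`, for all `a₁, a₂ ∈ L(V)`:
`a₁a₂ = tr(a₁)tr(a₂) • I + (λ₁(v₂)λ₂(v₃)λ₃(v₁))⁻¹ •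
 Σ_{σ∈S₃} ε(σ) tr(a₁ c_{σ(1),σ(2)}) tr(a₂ c_{σ(2),σ(3)}) • c_{σ(3),σ(1)}`. -/
theorem stmt18 (k V : Type*) [Field k] [AddCommGroup V] [Module k V]
    [FiniteDimensional k V] (hdim : Module.finrank k V = 2)
    (v : Fin 3 → V) (lam : Fin 3 → Module.Dual k V)
    (hv : ∀ i, v i ≠ 0) (hlam : ∀ i, lam i ≠ 0)
    (hzero : ∀ i, lam i (v i) = 0)
    (hnc : ∀ i j, i ≠ j → v i ∉ Submodule.span k {v j})
    (c : Fin 3 → Fin 3 → Module.End k V)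
    (hc : ∀ i j (u : V), c i j u = lam j u • v i)
    (a₁ a₂ : Module.End k V) :
    a₁ * a₂ =
      (LinearMap.trace k V a₁ * LinearMap.trace k V a₂) • (1 : Module.End k V)
      + (lam 0 (v 1) * lam 1 (v 2) * lam 2 (v 0))⁻¹ •
        ∑ σ : Equiv.Perm (Fin 3),
          (((Equiv.Perm.sign σ : ℤ) : k) *
            LinearMap.trace k V (a₁ * c (σ 0) (σ 1)) *
            LinearMap.trace k V (a₂ * c (σ 1) (σ 2))) • c (σ 2) (σ 0) :=
  stmt18_general k V hdim v lam hlam hzero hnc c hc a₁ a₂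
end

section
/- Taking V = k², v₁ = (1,0), λ₁ = (0,1), v₂ = (0,1), λ₂ = (1,0), v₃ = (1,1), λ₃ = (1,−1), and c_{i,j} the rank-one matrix vᵢλⱼ, the 7-term formula a·b = tr(a)tr(b)I + Σ_{σ∈S₃} ε(σ) tr(a c_{σ(1),σ(2)}) tr(b c_{σ(2),σ(3)}) c_{σ(3),σ(1)} holds for all 2×2 matrices a, b, and expanding it in matrix entries recovers Strassen's original seven products: e.g. (ab)₁₁ = (a₁₁+a₂₂)(b₁₁+b₂₂) + a₂₂(b₂₁−b₁₁) + (a₁₂−a₂₂)(b₂₁+b₂₂) + (a₁₁+a₁₂)b₂₂·(−1) + ... matching Strassen's terms I–VII. -/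
/-- Strassen's original algorithm from the 7-term formula, with `V = k²`,
`v₁=(1,0), λ₁=(0,1), v₂=(0,1), λ₂=(1,0), v₃=(1,1), λ₃=(1,−1)` and
`c_{i,j} = vᵢλⱼ` the rank-one matrices.  The formula
`a·b = tr(a)tr(b)·I + Σ_{σ∈S₃} ε(σ) tr(a c_{σ(1),σ(2)}) tr(b c_{σ(2),σ(3)}) c_{σ(3),σ(1)}`
holds for all 2×2 matrices `a, b`, and in matrix entries it recovers Strassen's
seven products I–VII. -/
theorem stmt19 (k : Type*) [Field k]
    (vcol : Fin 3 → Fin 2 → k) (lrow : Fin 3 → Fin 2 → k)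
    (hv : vcol = ![![1, 0], ![0, 1], ![1, 1]])
    (hl : lrow = ![![0, 1], ![1, 0], ![1, -1]])
    (c : Fin 3 → Fin 3 → Matrix (Fin 2) (Fin 2) k)
    (hc : ∀ i j, c i j = Matrix.of fun p q => vcol i p * lrow j q)
    (a b : Matrix (Fin 2) (Fin 2) k) :
    (a * b =
      (Matrix.trace a * Matrix.trace b) • (1 : Matrix (Fin 2) (Fin 2) k)
      + ∑ σ : Equiv.Perm (Fin 3),
          (((Equiv.Perm.sign σ : ℤ) : k) *
            Matrix.trace (a * c (σ 0) (σ 1)) *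
            Matrix.trace (b * c (σ 1) (σ 2))) • c (σ 2) (σ 0)) ∧
    -- Strassen's seven products
    (let I   := (a 0 0 + a 1 1) * (b 0 0 + b 1 1)
     let II  := (a 1 0 + a 1 1) * b 0 0
     let III := a 0 0 * (b 0 1 - b 1 1)
     let IV  := a 1 1 * (b 1 0 - b 0 0)
     let Vt  := (a 0 0 + a 0 1) * b 1 1
     let VI  := (a 1 0 - a 0 0) * (b 0 0 + b 0 1)
     let VII := (a 0 1 - a 1 1) * (b 1 0 + b 1 1)
     (a * b) 0 0 = I + IV - Vt + VII ∧
     (a * b) 0 1 = III + Vt ∧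
     (a * b) 1 0 = II + IV ∧
     (a * b) 1 1 = I - II + III + VI) := by
  subst hv hl
  have huniv : (Finset.univ : Finset (Equiv.Perm (Fin 3))) =
      {1, Equiv.swap 0 1, Equiv.swap 0 2, Equiv.swap 1 2,
       Equiv.swap 0 1 * Equiv.swap 1 2, Equiv.swap 0 2 * Equiv.swap 1 2} := by decide
  have hsum : ∀ f : Equiv.Perm (Fin 3) → Matrix (Fin 2) (Fin 2) k,
      ∑ σ : Equiv.Perm (Fin 3), f σ =
        f 1 + f (Equiv.swap 0 1) + f (Equiv.swap 0 2) + f (Equiv.swap 1 2)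
        + f (Equiv.swap 0 1 * Equiv.swap 1 2) + f (Equiv.swap 0 2 * Equiv.swap 1 2) := by
    intro f
    rw [huniv]
    rw [Finset.sum_insert (by decide), Finset.sum_insert (by decide),
      Finset.sum_insert (by decide), Finset.sum_insert (by decide),
      Finset.sum_insert (by decide), Finset.sum_singleton]
    abel
  have s1 : ((Equiv.Perm.sign (1 : Equiv.Perm (Fin 3)) : ℤ) : k) = 1 := by
    simp
  have s2 : ((Equiv.Perm.sign (Equiv.swap (0:Fin 3) 1) : ℤ) : k) = -1 := by
    rw [Equiv.Perm.sign_swap (by decide)]; simp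
  have s3 : ((Equiv.Perm.sign (Equiv.swap (0:Fin 3) 2) : ℤ) : k) = -1 := by
    rw [Equiv.Perm.sign_swap (by decide)]; simp
  have s4 : ((Equiv.Perm.sign (Equiv.swap (1:Fin 3) 2) : ℤ) : k) = -1 := by
    rw [Equiv.Perm.sign_swap (by decide)]; simp
  have s5 : ((Equiv.Perm.sign ((Equiv.swap 0 1 * Equiv.swap 1 2 : Equiv.Perm (Fin 3))) : ℤ) : k) = 1 := by
    rw [map_mul, Equiv.Perm.sign_swap (by decide), Equiv.Perm.sign_swap (by decide)]; simp
  have s6 : ((Equiv.Perm.sign ((Equiv.swap 0 2 * Equiv.swap 1 2 : Equiv.Perm (Fin 3))) : ℤ) : k) = 1 := by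
    rw [map_mul, Equiv.Perm.sign_swap (by decide), Equiv.Perm.sign_swap (by decide)]; simp
  constructor
  · ext i j
    rw [hsum]
    have e1 : Equiv.swap (0:Fin 3) 1 0 = 1 := by decide
    have e2 : Equiv.swap (0:Fin 3) 1 1 = 0 := by decide
    have e3 : Equiv.swap (0:Fin 3) 1 2 = 2 := by decide
    have e4 : Equiv.swap (0:Fin 3) 2 0 = 2 := by decide
    have e5 : Equiv.swap (0:Fin 3) 2 1 = 1 := by decide
    have e6 : Equiv.swap (0:Fin 3) 2 2 = 0 := by decide
    have e7 : Equiv.swap (1:Fin 3) 2 0 = 0 := by decide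
    have e8 : Equiv.swap (1:Fin 3) 2 1 = 2 := by decide
    have e9 : Equiv.swap (1:Fin 3) 2 2 = 1 := by decide
    have e10 : ((Equiv.swap 0 1 * Equiv.swap 1 2 : Equiv.Perm (Fin 3))) 0 = 1 := by decide
    have e11 : ((Equiv.swap 0 1 * Equiv.swap 1 2 : Equiv.Perm (Fin 3))) 1 = 2 := by decide
    have e12 : ((Equiv.swap 0 1 * Equiv.swap 1 2 : Equiv.Perm (Fin 3))) 2 = 0 := by decide
    have e13 : ((Equiv.swap 0 2 * Equiv.swap 1 2 : Equiv.Perm (Fin 3))) 0 = 2 := by decide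
    have e14 : ((Equiv.swap 0 2 * Equiv.swap 1 2 : Equiv.Perm (Fin 3))) 1 = 0 := by decide
    have e15 : ((Equiv.swap 0 2 * Equiv.swap 1 2 : Equiv.Perm (Fin 3))) 2 = 1 := by decide
    simp only [Equiv.Perm.one_apply, e1, e2, e3, e4, e5, e6, e7, e8, e9, e10, e11, e12,
      e13, e14, e15, s1, s2, s3, s4, s5, s6, hc,
      Matrix.trace_fin_two, Matrix.mul_apply, Fin.sum_univ_two, Matrix.of_apply,
      Matrix.add_apply, Matrix.smul_apply, smul_eq_mul]
    fin_cases i <;> fin_cases j <;>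
      simp [Matrix.one_apply, Matrix.vecHead, Matrix.vecTail] <;> ring
  · simp only [Matrix.mul_apply, Fin.sum_univ_two]
    refine ⟨by ring, by ring, by ring, by ring⟩
end
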